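/- arXiv:math-ph/0206041 — 7 statements merged into one kernel-verified Lean document; each statement's English description precedes it below -/
import Mathlib

section
/- With the same trapezoidal-integration definition of discrete powers on the chain {ℓ/n : 0 ≤ ℓ ≤ n}, one has Z^{:4:}(x) = x⁴ + 2x²/n² for all x = ℓ/n. -/
/-- Discrete fourth power on the chain `{ℓ/n}`: `Z^{:4:}(x) = x⁴ + 2x²/n²`. -/
theorem discrete_fourth_power (n : ℕ) (hn : 0 < n) (Z : ℕ → ℕ → ℝ)
    (hZ0 : ∀ ℓ, Z 0 ℓ = 1)
    (hZinit : ∀ k, Z (k + 1) 0 = 0)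
    (hZrec : ∀ k ℓ, Z (k + 1) (ℓ + 1) =
      Z (k + 1) ℓ + ((k : ℝ) + 1) * (Z k ℓ + Z k (ℓ + 1)) / (2 * n)) :
    ∀ ℓ ≤ n, Z 4 ℓ = ((ℓ : ℝ) / n) ^ 4 + 2 * ((ℓ : ℝ) / n) ^ 2 / (n : ℝ) ^ 2 := by
  have hn' : (n : ℝ) ≠ 0 := Nat.cast_ne_zero.mpr hn.ne'
  have h1 : ∀ ℓ, Z 1 ℓ = (ℓ : ℝ) / n := by
    intro ℓ
    induction ℓ with
    | zero => simpa using hZinit 0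
    | succ m ih =>
      rw [hZrec 0 m, ih, hZ0, hZ0]
      push_cast
      field_simp
      ring
  have h2 : ∀ ℓ, Z 2 ℓ = ((ℓ : ℝ) / n) ^ 2 := by
    intro ℓ
    induction ℓ with
    | zero => simpa using hZinit 1
    | succ m ih =>
      rw [hZrec 1 m, ih, h1, h1]
      push_cast
      field_simp
      ring
  have h3 : ∀ ℓ, Z 3 ℓ = ((ℓ : ℝ) / n) ^ 3 + ((ℓ : ℝ) / n) / (2 * (n : ℝ) ^ 2) := by
    intro ℓ
    induction ℓ with
    | zero => simpa using hZinit 2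
    | succ m ih =>
      rw [hZrec 2 m, ih, h2, h2]
      push_cast
      field_simp
      ring
  intro ℓ hℓ
  induction ℓ with
  | zero => simpa using hZinit 3
  | succ m ih =>
    rw [hZrec 3 m, ih (by omega), h3, h3]
    push_cast
    field_simp
    ring
end

section
/- With the same trapezoidal-integration definition of discrete powers on the chain {ℓ/n : 0 ≤ ℓ ≤ n}, one has Z^{:5:}(x) = x⁵ + 5x³/n² + 3x/(2n⁴) for all x = ℓ/n. -/
/-- Discrete fifth power on the chain `{ℓ/n}`:
`Z^{:5:}(x) = x⁵ + 5x³/n² + 3x/(2n⁴)`. -/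
theorem discrete_fifth_power (n : ℕ) (hn : 0 < n) (Z : ℕ → ℕ → ℝ)
    (hZ0 : ∀ ℓ, Z 0 ℓ = 1)
    (hZinit : ∀ k, Z (k + 1) 0 = 0)
    (hZrec : ∀ k ℓ, Z (k + 1) (ℓ + 1) =
      Z (k + 1) ℓ + ((k : ℝ) + 1) * (Z k ℓ + Z k (ℓ + 1)) / (2 * n)) :
    ∀ ℓ ≤ n, Z 5 ℓ = ((ℓ : ℝ) / n) ^ 5 + 5 * ((ℓ : ℝ) / n) ^ 3 / (n : ℝ) ^ 2
      + 3 * ((ℓ : ℝ) / n) / (2 * (n : ℝ) ^ 4) := by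
  have hn' : (n : ℝ) ≠ 0 := Nat.cast_ne_zero.mpr hn.ne'
  have h1 : ∀ ℓ : ℕ, Z 1 ℓ = (ℓ : ℝ) / n := by
    intro ℓ
    induction ℓ with
    | zero => simpa using hZinit 0
    | succ m ih =>
      rw [hZrec 0 m, ih, hZ0, hZ0]
      push_cast
      field_simp
      ring
  have h2 : ∀ ℓ : ℕ, Z 2 ℓ = ((ℓ : ℝ) / n) ^ 2 := by
    intro ℓ
    induction ℓ with
    | zero => simpa using hZinit 1
    | succ m ih =>
      rw [hZrec 1 m, ih, h1, h1]
      push_cast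
      field_simp
      ring
  have h3 : ∀ ℓ : ℕ, Z 3 ℓ = ((ℓ : ℝ) / n) ^ 3 + ((ℓ : ℝ) / n) / (2 * (n : ℝ) ^ 2) := by
    intro ℓ
    induction ℓ with
    | zero => simpa using hZinit 2
    | succ m ih =>
      rw [hZrec 2 m, ih, h2, h2]
      push_cast
      field_simp
      ring
  have h4 : ∀ ℓ : ℕ, Z 4 ℓ = ((ℓ : ℝ) / n) ^ 4 + 2 * ((ℓ : ℝ) / n) ^ 2 / (n : ℝ) ^ 2 := by
    intro ℓ
    induction ℓ with
    | zero => simpa using hZinit 3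
    | succ m ih =>
      rw [hZrec 3 m, ih, h3, h3]
      push_cast
      field_simp
      ring
  have h5 : ∀ ℓ : ℕ, Z 5 ℓ = ((ℓ : ℝ) / n) ^ 5 + 5 * ((ℓ : ℝ) / n) ^ 3 / (n : ℝ) ^ 2
      + 3 * ((ℓ : ℝ) / n) / (2 * (n : ℝ) ^ 4) := by
    intro ℓ
    induction ℓ with
    | zero => simpa using hZinit 4
    | succ m ih =>
      rw [hZrec 4 m, ih, h4, h4]
      push_cast
      field_simp
      ring
  exact fun ℓ _ => h5 ℓ
end

section
/- For every fixed k ≥ 1 there is a constant λ_k such that for all n ≥ 1 and all points x = ℓ/n of the subdivided interval [0,1], |Z^{:k:}(x) − x^k| ≤ λ_k · x^{max(k−2,0)} / n², where Z^{:k:} is defined by trapezoidal discrete integration on the chain {ℓ/n}. -/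
/-!
Write `x_ℓ = ℓ / n` and `e_k(ℓ) = Z^{:k:}(x_ℓ) - x_ℓ ^ k`. Since `x_{ℓ+1} ^ (k+1) - x_ℓ ^ (k+1)` is
the integral of `(k+1) t ^ k` over `[x_ℓ, x_{ℓ+1}]`, the increment `e_{k+1}(ℓ+1) - e_{k+1}(ℓ)` is
`(k+1)/(2n) (e_k(ℓ) + e_k(ℓ+1))` plus the error of the trapezoidal rule for that integral, which is
`O(x_{ℓ+1} ^ (k-2) / n³)`. Summing at most `ℓ` such increments, each bounded by its value at the
right end, gives the bound for `k + 1` with `λ_{k+1} = (k+1) λ_k + (k+1) k² / 12`, starting from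
`λ_0 = 0`.
-/

open Set Interval

theorem abs_trapezoid_pow_sub_le {x y : ℝ} (hx : 0 ≤ x) (hxy : x < y) (k : ℕ) :
    |(y - x) * (((k + 1) * x ^ k + (k + 1) * y ^ k) / 2) - (y ^ (k + 1) - x ^ (k + 1))| ≤
      (y - x) ^ 3 * ((k + 1) * k ^ 2 * y ^ (k - 2)) / 12 := by
  have hζ : ∀ t, |iteratedDerivWithin 2 (fun t : ℝ ↦ (k + 1) * t ^ k) [[x, y]] t| ≤
      (k + 1) * k ^ 2 * y ^ (k - 2) := by
    intro t
    rw [uIcc_of_le hxy.le]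
    by_cases ht : t ∈ Icc x y
    · have hdesc : (k.descFactorial 2 : ℝ) ≤ k ^ 2 := by
        exact_mod_cast Nat.descFactorial_le_pow k 2
      have ht₀ : 0 ≤ t := hx.trans ht.1
      rw [iteratedDerivWithin_const_mul_field, iteratedDerivWithin_pow ht (uniqueDiffOn_Icc hxy),
        ← mul_assoc, abs_of_nonneg (by positivity)]
      gcongr
      exact ht.2
    · rw [iteratedDerivWithin_succ, derivWithin_zero_of_notMem_closure
        (by rwa [closure_Icc]), abs_zero]
      have := hx.trans hxy.le
      positivity
  have h := trapezoidal_error_le_of_c2 (by fun_prop) hζ one_pos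
  simp only [trapezoidal_error, trapezoidal_integral, intervalIntegral.integral_const_mul,
    integral_pow] at h
  convert h using 1
  · congr 1
    simp only [Nat.cast_one, div_one, tsub_self, Finset.range_zero, Finset.sum_empty, add_zero,
      sub_right_inj]
    field_simp
  · rw [abs_of_pos (sub_pos.2 hxy)]
    ring

theorem abs_le_mul_of_abs_sub_le {e g : ℕ → ℝ} (hg : Monotone g) (he : e 0 = 0) {N : ℕ}
    (h : ∀ ℓ < N, |e (ℓ + 1) - e ℓ| ≤ g (ℓ + 1)) : ∀ ℓ ≤ N, |e ℓ| ≤ ℓ * g ℓ := by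
  intro ℓ hℓ
  induction ℓ with
  | zero => simp [he]
  | succ ℓ ih =>
    calc |e (ℓ + 1)| ≤ |e ℓ| + |e (ℓ + 1) - e ℓ| := by
          simpa using abs_add_le (e ℓ) (e (ℓ + 1) - e ℓ)
      _ ≤ ℓ * g (ℓ + 1) + g (ℓ + 1) := by
        gcongr
        · exact (ih (by omega)).trans (by gcongr; exact hg ℓ.le_succ)
        · exact h ℓ hℓ
      _ = (ℓ + 1 : ℕ) * g (ℓ + 1) := by push_cast; ring

theorem mul_pow_sub_two_le {x : ℝ} (hx₀ : 0 ≤ x) (hx₁ : x ≤ 1) (k : ℕ) :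
    x * x ^ (k - 2) ≤ x ^ (k + 1 - 2) := by
  rw [← pow_succ']
  exact pow_le_pow_of_le_one hx₀ hx₁ (by omega)

theorem abs_sub_pow_succ_le {n k : ℕ} (hn : 0 < n) {f F : ℕ → ℝ} {lam : ℝ} (hlam : 0 ≤ lam)
    (hF₀ : F 0 = 0)
    (hF : ∀ ℓ, F (ℓ + 1) = F ℓ + ((k : ℝ) + 1) * (f ℓ + f (ℓ + 1)) / (2 * n))
    (hf : ∀ ℓ ≤ n, |f ℓ - ((ℓ : ℝ) / n) ^ k| ≤ lam * ((ℓ : ℝ) / n) ^ (k - 2) / (n : ℝ) ^ 2) :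
    ∀ ℓ ≤ n, |F ℓ - ((ℓ : ℝ) / n) ^ (k + 1)| ≤
      ((k + 1) * lam + (k + 1) * k ^ 2 / 12) * ((ℓ : ℝ) / n) ^ (k + 1 - 2) / (n : ℝ) ^ 2 := by
  set C : ℝ := (k + 1) * lam + (k + 1) * k ^ 2 / 12
  have hC : 0 ≤ C := by positivity
  have hn' : (0 : ℝ) < n := by exact_mod_cast hn
  have hstep : ∀ ℓ < n, |(F (ℓ + 1) - (((ℓ + 1 : ℕ) : ℝ) / n) ^ (k + 1)) -
      (F ℓ - ((ℓ : ℝ) / n) ^ (k + 1))| ≤ C * ((((ℓ + 1 : ℕ) : ℝ) / n) ^ (k - 2) / n ^ 3) := by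
    intro ℓ hℓ
    set x : ℝ := (ℓ : ℝ) / n
    set y : ℝ := ((ℓ + 1 : ℕ) : ℝ) / n
    have hx : 0 ≤ x := by positivity
    have hyx : y - x = 1 / n := by simp only [x, y]; push_cast; field_simp; ring
    have hxy : x < y := by rw [← sub_pos, hyx]; positivity
    have hsplit : (F (ℓ + 1) - y ^ (k + 1)) - (F ℓ - x ^ (k + 1)) =
        (k + 1) / (2 * n) * ((f ℓ - x ^ k) + (f (ℓ + 1) - y ^ k)) +
          ((y - x) * (((k + 1) * x ^ k + (k + 1) * y ^ k) / 2) - (y ^ (k + 1) - x ^ (k + 1))) := by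
      rw [hF, hyx]; ring
    have hfx : |f ℓ - x ^ k| ≤ lam * y ^ (k - 2) / n ^ 2 :=
      (hf ℓ hℓ.le).trans (by gcongr)
    have hfy : |f (ℓ + 1) - y ^ k| ≤ lam * y ^ (k - 2) / n ^ 2 := hf (ℓ + 1) hℓ
    calc _ ≤ (k + 1) / (2 * n) * (|f ℓ - x ^ k| + |f (ℓ + 1) - y ^ k|) +
          (y - x) ^ 3 * ((k + 1) * k ^ 2 * y ^ (k - 2)) / 12 := by
          rw [hsplit]
          refine (abs_add_le _ _).trans (add_le_add ?_ (abs_trapezoid_pow_sub_le hx hxy k))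
          rw [abs_mul, abs_of_nonneg (by positivity)]
          gcongr
          exact abs_add_le _ _
      _ ≤ (k + 1) / (2 * n) * (lam * y ^ (k - 2) / n ^ 2 + lam * y ^ (k - 2) / n ^ 2) +
          (y - x) ^ 3 * ((k + 1) * k ^ 2 * y ^ (k - 2)) / 12 := by gcongr
      _ = C * (y ^ (k - 2) / n ^ 3) := by rw [hyx]; field_simp; ring
  have hmono : Monotone fun ℓ : ℕ ↦ C * (((ℓ : ℝ) / n) ^ (k - 2) / n ^ 3) := by
    intro a b hab
    dsimp only
    gcongr
  intro ℓ hℓ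
  have hx₁ : (ℓ : ℝ) / n ≤ 1 := by rw [div_le_one hn']; exact_mod_cast hℓ
  calc _ ≤ ℓ * (C * (((ℓ : ℝ) / n) ^ (k - 2) / n ^ 3)) :=
        abs_le_mul_of_abs_sub_le (e := fun ℓ ↦ F ℓ - ((ℓ : ℝ) / n) ^ (k + 1)) hmono
          (by simp [hF₀]) hstep ℓ hℓ
    _ = C * ((ℓ / n) * ((ℓ : ℝ) / n) ^ (k - 2)) / n ^ 2 := by field_simp
    _ ≤ C * ((ℓ : ℝ) / n) ^ (k + 1 - 2) / n ^ 2 := by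
        gcongr
        exact mul_pow_sub_two_le (by positivity) hx₁ k

noncomputable def discretePowerConst : ℕ → ℝ
  | 0 => 0
  | k + 1 => (k + 1) * discretePowerConst k + (k + 1) * k ^ 2 / 12

theorem discretePowerConst_nonneg (k : ℕ) : 0 ≤ discretePowerConst k := by
  induction k with
  | zero => exact le_rfl
  | succ k ih => unfold discretePowerConst; positivity

theorem abs_discretePower_sub_pow_le {n : ℕ} (hn : 0 < n) {Z : ℕ → ℕ → ℝ}
    (hZ₀ : ∀ ℓ, Z 0 ℓ = 1) (hZ_zero : ∀ j, Z (j + 1) 0 = 0)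
    (hZ : ∀ j ℓ, Z (j + 1) (ℓ + 1) =
      Z (j + 1) ℓ + ((j : ℝ) + 1) * (Z j ℓ + Z j (ℓ + 1)) / (2 * n)) (k : ℕ) :
    ∀ ℓ ≤ n, |Z k ℓ - ((ℓ : ℝ) / n) ^ k| ≤
      discretePowerConst k * ((ℓ : ℝ) / n) ^ (k - 2) / (n : ℝ) ^ 2 := by
  induction k with
  | zero => simp [hZ₀, discretePowerConst]
  | succ k ih =>
    exact abs_sub_pow_succ_le hn (discretePowerConst_nonneg k) (hZ_zero k) (hZ k) ih

theorem discrete_power_approx_general (k : ℕ) :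
    ∃ lam : ℝ, ∀ n : ℕ, 1 ≤ n → ∀ Z : ℕ → ℕ → ℝ,
      (∀ ℓ, Z 0 ℓ = 1) →
      (∀ j, Z (j + 1) 0 = 0) →
      (∀ j ℓ, Z (j + 1) (ℓ + 1) =
        Z (j + 1) ℓ + ((j : ℝ) + 1) * (Z j ℓ + Z j (ℓ + 1)) / (2 * n)) →
      ∀ ℓ ≤ n, |Z k ℓ - ((ℓ : ℝ) / n) ^ k| ≤
        lam * ((ℓ : ℝ) / n) ^ (k - 2) / (n : ℝ) ^ 2 :=
  ⟨discretePowerConst k, fun _ hn _ hZ₀ hZ_zero hZ ↦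
    abs_discretePower_sub_pow_le hn hZ₀ hZ_zero hZ k⟩

/-- For each fixed `k ≥ 1` there is a constant `λ_k` such that on every
subdivision `{ℓ/n}` of `[0,1]`, the discrete power satisfies
`|Z^{:k:}(x) − x^k| ≤ λ_k x^(max(k−2,0)) / n²` (here `k - 2` is truncated
natural subtraction, which equals `max (k-2) 0`). -/
theorem discrete_power_approx (k : ℕ) (hk : 1 ≤ k) :
    ∃ lam : ℝ, ∀ n : ℕ, 1 ≤ n → ∀ Z : ℕ → ℕ → ℝ,
      (∀ ℓ, Z 0 ℓ = 1) →
      (∀ j, Z (j + 1) 0 = 0) →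
      (∀ j ℓ, Z (j + 1) (ℓ + 1) =
        Z (j + 1) ℓ + ((j : ℝ) + 1) * (Z j ℓ + Z j (ℓ + 1)) / (2 * n)) →
      ∀ ℓ ≤ n, |Z k ℓ - ((ℓ : ℝ) / n) ^ k| ≤
        lam * ((ℓ : ℝ) / n) ^ (k - 2) / (n : ℝ) ^ 2 :=
  discrete_power_approx_general k
end

section
/- For each fixed k and each x ∈ [0,1], the sequence of discrete powers Z^{:k:}_n(x_n), evaluated at the lattice point x_n = ⌊nx⌋/n of the n-th subdivision, converges to x^k as n → ∞. -/
/-!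
Compare `Z k ℓ` with `(ℓ / n) ^ k`. Passing from `ℓ` to `ℓ + 1`, the error in degree `k + 1` picks
up `k + 1` times the average error in degree `k` over one cell of width `1 / n`, plus the error of
the trapezoid rule for `∫ (k + 1) t ^ k` over that cell, which is `O(1 / n²)`. Summing over at most
`n` cells, induction on `k` gives an error `O(1 / n)` uniformly on the lattice, and `⌊n x⌋ / n → x`.
-/

open Filter Finset

/-- The error of the trapezoid rule for `∫ t in a..b, (k + 1) * t ^ k`. -/
noncomputable def trapezoidPowDefect (k : ℕ) (a b : ℝ) : ℝ :=
  (k + 1) * (a ^ k + b ^ k) / 2 * (b - a) - (b ^ (k + 1) - a ^ (k + 1))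

lemma pow_sub_pow_le_mul_sub {a b : ℝ} (ha : 0 ≤ a) (hab : a ≤ b) (hb : b ≤ 1) (k : ℕ) :
    b ^ k - a ^ k ≤ k * (b - a) := by
  have hmax : max |b| |a| ≤ 1 := by
    rw [abs_of_nonneg (ha.trans hab), abs_of_nonneg ha]
    exact max_le hb (hab.trans hb)
  calc b ^ k - a ^ k ≤ |b ^ k - a ^ k| := le_abs_self _
    _ ≤ |b - a| * k * max |b| |a| ^ (k - 1) := abs_pow_sub_pow_le ..
    _ ≤ |b - a| * k := mul_le_of_le_one_right (by positivity) (pow_le_one₀ (by positivity) hmax)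
    _ = k * (b - a) := by rw [abs_of_nonneg (sub_nonneg.2 hab), mul_comm]

lemma pow_le_pow_mul_pow_le {a b : ℝ} (ha : 0 ≤ a) (hab : a ≤ b) {i k : ℕ} (hik : i ≤ k) :
    a ^ k ≤ b ^ i * a ^ (k - i) ∧ b ^ i * a ^ (k - i) ≤ b ^ k := by
  have hb : 0 ≤ b := ha.trans hab
  constructor
  · calc a ^ k = a ^ i * a ^ (k - i) := by rw [← pow_add, Nat.add_sub_cancel' hik]
      _ ≤ b ^ i * a ^ (k - i) := by gcongr
  · calc b ^ i * a ^ (k - i) ≤ b ^ i * b ^ (k - i) := by gcongr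
      _ = b ^ k := by rw [← pow_add, Nat.add_sub_cancel' hik]

-- `b ^ (k + 1) - a ^ (k + 1) = (b - a) * ∑ b ^ i * a ^ (k - i)`, a sum of `k + 1` terms in
-- `[a ^ k, b ^ k]`, each within `(b ^ k - a ^ k) / 2 ≤ k (b - a) / 2` of the trapezoid average.
lemma abs_trapezoidPowDefect_le {a b : ℝ} (ha : 0 ≤ a) (hab : a ≤ b) (hb : b ≤ 1) (k : ℕ) :
    |trapezoidPowDefect k a b| ≤ k * (k + 1) / 2 * (b - a) ^ 2 := by
  set avg := (a ^ k + b ^ k) / 2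
  have hdefect : trapezoidPowDefect k a b
      = (∑ i ∈ range (k + 1), (avg - b ^ i * a ^ (k - i))) * (b - a) := by
    rw [trapezoidPowDefect, ← geom_sum₂_mul, sum_sub_distrib, sum_const, card_range,
      nsmul_eq_mul]
    simp only [Nat.add_sub_cancel]
    push_cast
    ring
  have hterm : ∀ i ∈ range (k + 1), |avg - b ^ i * a ^ (k - i)| ≤ k * (b - a) / 2 := by
    intro i hi
    obtain ⟨hlow, hhigh⟩ := pow_le_pow_mul_pow_le ha hab (Nat.lt_succ_iff.mp (mem_range.mp hi))
    have := pow_sub_pow_le_mul_sub ha hab hb k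
    have havg : avg = (a ^ k + b ^ k) / 2 := rfl
    rw [abs_le]
    constructor <;> linarith
  calc |trapezoidPowDefect k a b|
      = |∑ i ∈ range (k + 1), (avg - b ^ i * a ^ (k - i))| * (b - a) := by
        rw [hdefect, abs_mul, abs_of_nonneg (sub_nonneg.2 hab)]
    _ ≤ (∑ _i ∈ range (k + 1), k * (b - a) / 2) * (b - a) := by
        gcongr ?_ * _
        exact (abs_sum_le_sum_abs _ _).trans (sum_le_sum hterm)
    _ = k * (k + 1) / 2 * (b - a) ^ 2 := by
        rw [sum_const, card_range, nsmul_eq_mul]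
        push_cast
        ring

/-- `Z j ℓ` stands for `j! · Z^{:j:}_n(ℓ / n)`, the normalization under which it approximates
`(ℓ / n) ^ j`. -/
structure IsDiscretePowers (n : ℕ) (Z : ℕ → ℕ → ℝ) : Prop where
  zero : ∀ ℓ, Z 0 ℓ = 1
  succ_zero : ∀ j, Z (j + 1) 0 = 0
  succ_succ : ∀ j ℓ, Z (j + 1) (ℓ + 1) = Z (j + 1) ℓ + ((j : ℝ) + 1) * (Z j ℓ + Z j (ℓ + 1)) / (2 * n)

noncomputable def discretePowerErrorConst : ℕ → ℝ
  | 0 => 0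
  | k + 1 => (k + 1) * discretePowerErrorConst k + k * (k + 1) / 2

lemma discretePowerErrorConst_nonneg (k : ℕ) : 0 ≤ discretePowerErrorConst k := by
  induction k with
  | zero => exact le_rfl
  | succ k ih => rw [discretePowerErrorConst]; positivity

lemma mul_div_div_le_div {c : ℝ} (hc : 0 ≤ c) {ℓ n : ℕ} (hℓ : ℓ ≤ n) :
    c * ((ℓ : ℝ) / n) / n ≤ c / n :=
  div_le_div_of_nonneg_right
    (mul_le_of_le_one_right hc (div_le_one_of_le₀ (by exact_mod_cast hℓ) n.cast_nonneg))
    n.cast_nonneg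

namespace IsDiscretePowers

variable {n : ℕ} {Z : ℕ → ℕ → ℝ}

lemma sub_pow_succ_succ (hZ : IsDiscretePowers n Z) (hn : n ≠ 0) (k ℓ : ℕ) :
    Z (k + 1) (ℓ + 1) - (((ℓ + 1 : ℕ) : ℝ) / n) ^ (k + 1)
      = (Z (k + 1) ℓ - ((ℓ : ℝ) / n) ^ (k + 1))
        + (k + 1) * ((Z k ℓ - ((ℓ : ℝ) / n) ^ k) + (Z k (ℓ + 1) - (((ℓ + 1 : ℕ) : ℝ) / n) ^ k))
          / (2 * n)
        + trapezoidPowDefect k (ℓ / n) ((ℓ + 1 : ℕ) / n) := by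
  rw [hZ.succ_succ, trapezoidPowDefect]
  push_cast
  field_simp
  ring

theorem abs_sub_pow_le (hZ : IsDiscretePowers n Z) (hn : n ≠ 0) (k : ℕ) {ℓ : ℕ} (hℓ : ℓ ≤ n) :
    |Z k ℓ - ((ℓ : ℝ) / n) ^ k| ≤ discretePowerErrorConst k * (ℓ / n) / n := by
  have hn' : (0 : ℝ) < n := by positivity
  induction k generalizing ℓ with
  | zero => simp [hZ.zero, discretePowerErrorConst]
  | succ k ih =>
    have ih' : ∀ m ≤ n, |Z k m - ((m : ℝ) / n) ^ k| ≤ discretePowerErrorConst k / n :=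
      fun m hm ↦ (ih hm).trans (mul_div_div_le_div (discretePowerErrorConst_nonneg k) hm)
    induction ℓ with
    | zero => simp [hZ.succ_zero]
    | succ ℓ ihℓ =>
      have hℓ' : ℓ ≤ n := ℓ.le_succ.trans hℓ
      have hcell : ((ℓ + 1 : ℕ) : ℝ) / n - ℓ / n = 1 / n := by push_cast; ring
      have htrap := abs_trapezoidPowDefect_le (a := ℓ / n) (b := (ℓ + 1 : ℕ) / n) (by positivity)
        (by gcongr; simp) (div_le_one_of_le₀ (by exact_mod_cast hℓ) hn'.le) k
      rw [hcell] at htrap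
      have hmid : |(k + 1) * ((Z k ℓ - ((ℓ : ℝ) / n) ^ k)
          + (Z k (ℓ + 1) - (((ℓ + 1 : ℕ) : ℝ) / n) ^ k)) / (2 * n)|
          ≤ (k + 1) * (2 * (discretePowerErrorConst k / n)) / (2 * n) := by
        rw [abs_div, abs_mul, abs_of_nonneg (by positivity : (0 : ℝ) ≤ k + 1),
          abs_of_pos (by positivity : (0 : ℝ) < 2 * n)]
        gcongr
        exact (abs_add_le _ _).trans (by linarith [ih' ℓ hℓ', ih' (ℓ + 1) hℓ])
      rw [hZ.sub_pow_succ_succ hn]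
      calc _ ≤ discretePowerErrorConst (k + 1) * (ℓ / n) / n
            + (k + 1) * (2 * (discretePowerErrorConst k / n)) / (2 * n)
            + k * (k + 1) / 2 * (1 / n) ^ 2 :=
            (abs_add_le _ _).trans (add_le_add ((abs_add_le _ _).trans
              (add_le_add (ihℓ hℓ') hmid)) htrap)
        _ = _ := by
          rw [discretePowerErrorConst]
          push_cast
          field_simp
          ring

theorem abs_sub_pow_le_div (hZ : IsDiscretePowers n Z) (hn : n ≠ 0) (k : ℕ) {ℓ : ℕ}
    (hℓ : ℓ ≤ n) : |Z k ℓ - ((ℓ : ℝ) / n) ^ k| ≤ discretePowerErrorConst k / n :=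
  (hZ.abs_sub_pow_le hn k hℓ).trans (mul_div_div_le_div (discretePowerErrorConst_nonneg k) hℓ)

end IsDiscretePowers

/-- For fixed `k` and `x ∈ [0,1]`, the discrete powers evaluated at the
lattice points `⌊nx⌋/n` of the `n`-th subdivision converge to `x^k`. -/
theorem discrete_power_tendsto (k : ℕ) (x : ℝ) (hx : x ∈ Set.Icc (0 : ℝ) 1)
    (Z : ℕ → ℕ → ℕ → ℝ)
    (hZ0 : ∀ n, 1 ≤ n → ∀ ℓ, Z n 0 ℓ = 1)
    (hZinit : ∀ n, 1 ≤ n → ∀ j, Z n (j + 1) 0 = 0)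
    (hZrec : ∀ n, 1 ≤ n → ∀ j ℓ, Z n (j + 1) (ℓ + 1) =
      Z n (j + 1) ℓ + ((j : ℝ) + 1) * (Z n j ℓ + Z n j (ℓ + 1)) / (2 * n)) :
    Tendsto (fun n : ℕ => Z n k ⌊(n : ℝ) * x⌋₊) atTop (nhds (x ^ k)) := by
  obtain ⟨hx0, hx1⟩ := hx
  have hlattice : Tendsto (fun n : ℕ => ((⌊(n : ℝ) * x⌋₊ : ℝ) / n) ^ k) atTop (nhds (x ^ k)) := by
    refine Tendsto.pow ?_ k
    simpa only [Function.comp_def, mul_comm] using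
      (tendsto_nat_floor_mul_div_atTop hx0).comp tendsto_natCast_atTop_atTop
  have herror : Tendsto (fun n : ℕ => Z n k ⌊(n : ℝ) * x⌋₊ - ((⌊(n : ℝ) * x⌋₊ : ℝ) / n) ^ k)
      atTop (nhds 0) := by
    refine squeeze_zero_norm' ?_ (tendsto_const_div_atTop_nhds_zero_nat (discretePowerErrorConst k))
    filter_upwards [eventually_ge_atTop 1] with n hn
    have hZ : IsDiscretePowers n (Z n) := ⟨hZ0 n hn, hZinit n hn, hZrec n hn⟩
    exact hZ.abs_sub_pow_le_div (by omega) k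
      (Nat.floor_le_of_le (mul_le_of_le_one_right n.cast_nonneg hx1))
  simpa using herror.add hlattice
end

section
/- Let |λ| < 2/δ and consider a chain of n edges each of length δ with endpoint x = nδ. Then the series ∑_{k=0}^∞ λ^k Z^{:k:}(x)/k!, where Z^{:k:} are the discrete powers on the chain (defined by trapezoidal integration), converges absolutely and equals ((1 + λδ/2)/(1 − λδ/2))^n. -/
/-!
With `u k ℓ = λ^k Z k ℓ / k!` and `c = λδ/2`, the recursion becomes
`u (k+1) (ℓ+1) = u (k+1) ℓ + c (u k ℓ + u k (ℓ+1))`. Induction gives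
`‖u k ℓ‖ ≤ 2^ℓ C(k+ℓ, ℓ) ‖c‖^k`, so for `‖c‖ < 1` every column is absolutely summable.
Summing the recursion over `k` shows that the column sums `s ℓ` satisfy
`s (ℓ+1) (1 - c) = s ℓ (1 + c)` with `s 0 = 1`.
-/
namespace DiscretePower

variable {c : ℂ} {u : ℕ → ℕ → ℂ}

theorem choose_bound_step (k ℓ : ℕ) :
    (k + 1 + ℓ).choose ℓ + (k + ℓ).choose ℓ + 2 * (k + (ℓ + 1)).choose (ℓ + 1)
      ≤ 2 * (k + 1 + (ℓ + 1)).choose (ℓ + 1) := by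
  have hmono : (k + ℓ).choose ℓ ≤ (k + 1 + ℓ).choose ℓ := Nat.choose_le_choose ℓ (by omega)
  have hpascal : (k + 1 + (ℓ + 1)).choose (ℓ + 1)
      = (k + 1 + ℓ).choose ℓ + (k + (ℓ + 1)).choose (ℓ + 1) := by
    rw [show k + 1 + (ℓ + 1) = (k + 1 + ℓ) + 1 by omega, Nat.choose_succ_succ,
      show k + 1 + ℓ = k + (ℓ + 1) by omega]
  omega

variable (hu0 : ∀ ℓ, u 0 ℓ = 1) (hinit : ∀ k, u (k + 1) 0 = 0)
  (hrec : ∀ k ℓ, u (k + 1) (ℓ + 1) = u (k + 1) ℓ + c * (u k ℓ + u k (ℓ + 1)))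
include hu0 hinit hrec

theorem norm_le (k ℓ : ℕ) :
    ‖u k ℓ‖ ≤ 2 ^ ℓ * (k + ℓ).choose ℓ * ‖c‖ ^ k := by
  induction k generalizing ℓ with
  | zero => simpa [hu0] using one_le_pow₀ one_le_two
  | succ k ihk =>
    induction ℓ with
    | zero => simp [hinit]
    | succ ℓ ihl =>
      have hstep : ‖u (k + 1) (ℓ + 1)‖ ≤ ‖u (k + 1) ℓ‖ + ‖c‖ * (‖u k ℓ‖ + ‖u k (ℓ + 1)‖) := by
        rw [hrec]
        grw [norm_add_le, norm_mul, norm_add_le]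
      grw [hstep, ihl, ihk, ihk]
      calc 2 ^ ℓ * ((k + 1 + ℓ).choose ℓ : ℝ) * ‖c‖ ^ (k + 1)
            + ‖c‖ * (2 ^ ℓ * ((k + ℓ).choose ℓ : ℝ) * ‖c‖ ^ k
              + 2 ^ (ℓ + 1) * ((k + (ℓ + 1)).choose (ℓ + 1) : ℝ) * ‖c‖ ^ k)
          = 2 ^ ℓ * ‖c‖ ^ (k + 1) * (((k + 1 + ℓ).choose ℓ + (k + ℓ).choose ℓ
              + 2 * (k + (ℓ + 1)).choose (ℓ + 1) : ℕ) : ℝ) := by push_cast; ring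
        _ ≤ 2 ^ ℓ * ‖c‖ ^ (k + 1) * ((2 * (k + 1 + (ℓ + 1)).choose (ℓ + 1) : ℕ) : ℝ) := by
            gcongr; exact choose_bound_step k ℓ
        _ = _ := by push_cast; ring

theorem summable_norm (hc : ‖c‖ < 1) (ℓ : ℕ) :
    Summable (fun k => ‖u k ℓ‖) := by
  refine Summable.of_nonneg_of_le (fun _ => norm_nonneg _)
    (norm_le hu0 hinit hrec · ℓ) ?_
  simp_rw [mul_assoc]
  exact (summable_choose_mul_geometric_of_norm_lt_one (R := ℝ) ℓ
    (by rwa [norm_norm])).mul_left _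

theorem tsum_succ_mul_one_sub (hc : ‖c‖ < 1) (ℓ : ℕ) :
    (∑' k, u k (ℓ + 1)) * (1 - c) = (∑' k, u k ℓ) * (1 + c) := by
  have hS := (summable_norm hu0 hinit hrec hc ℓ).of_norm
  have hT := (summable_norm hu0 hinit hrec hc (ℓ + 1)).of_norm
  have hdiff : ∑' k, (u k (ℓ + 1) - u k ℓ) = c * ((∑' k, u k ℓ) + ∑' k, u k (ℓ + 1)) := by
    rw [(hT.sub hS).tsum_eq_zero_add, hu0, hu0, sub_self, zero_add, ← hS.tsum_add hT,
      ← tsum_mul_left]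
    congr 1 with k
    rw [hrec]
    ring
  rw [hT.tsum_sub hS] at hdiff
  linear_combination hdiff

theorem tsum_eq_pow (hc : ‖c‖ < 1) (ℓ : ℕ) :
    ∑' k, u k ℓ = ((1 + c) / (1 - c)) ^ ℓ := by
  have hc1 : 1 - c ≠ 0 := by
    intro h
    simp [← eq_of_sub_eq_zero h] at hc
  induction ℓ with
  | zero =>
    rw [tsum_eq_single 0 fun k hk => ?_, hu0, pow_zero]
    obtain ⟨k, rfl⟩ := Nat.exists_eq_succ_of_ne_zero hk
    exact hinit k
  | succ ℓ ih =>
    rw [pow_succ, ← ih, eq_div_iff hc1 |>.mpr (tsum_succ_mul_one_sub hu0 hinit hrec hc ℓ)]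
    ring

end DiscretePower

/-- For `|λ| < 2/δ`, the series `∑_k λ^k Z^{:k:}(x)/k!` of discrete powers on a
chain of `n` edges of length `δ` converges absolutely and sums to the discrete
exponential `((1+λδ/2)/(1−λδ/2))^n` at the endpoint `x = nδ`. -/
theorem discrete_exponential_series (δ : ℝ) (hδ : 0 < δ) (lam : ℂ)
    (hlam : ‖lam‖ < 2 / δ) (n : ℕ) (Z : ℕ → ℕ → ℂ)
    (hZ0 : ∀ ℓ, Z 0 ℓ = 1)
    (hZinit : ∀ k, Z (k + 1) 0 = 0)
    (hZrec : ∀ k ℓ, Z (k + 1) (ℓ + 1) =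
      Z (k + 1) ℓ + ((k : ℂ) + 1) * (Z k ℓ + Z k (ℓ + 1)) * (δ : ℂ) / 2) :
    Summable (fun k : ℕ => ‖lam ^ k * Z k n / (k.factorial : ℂ)‖) ∧
    ∑' k : ℕ, lam ^ k * Z k n / (k.factorial : ℂ)
      = ((1 + lam * δ / 2) / (1 - lam * δ / 2)) ^ n := by
  set u : ℕ → ℕ → ℂ := fun k ℓ => lam ^ k * Z k ℓ / (k.factorial : ℂ)
  have hu0 : ∀ ℓ, u 0 ℓ = 1 := by simp [u, hZ0]
  have hinit : ∀ k, u (k + 1) 0 = 0 := by simp [u, hZinit]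
  have hrec : ∀ k ℓ, u (k + 1) (ℓ + 1) = u (k + 1) ℓ + lam * δ / 2 * (u k ℓ + u k (ℓ + 1)) := by
    intro k ℓ
    simp only [u, hZrec, Nat.factorial_succ, Nat.cast_mul, pow_succ]
    field_simp
    push_cast
    ring
  have hc : ‖lam * δ / 2‖ < 1 := by
    rw [norm_div, norm_mul, Complex.norm_real, Real.norm_of_nonneg hδ.le, Complex.norm_two]
    rw [lt_div_iff₀ hδ] at hlam
    linarith
  exact ⟨DiscretePower.summable_norm hu0 hinit hrec hc n,
    DiscretePower.tsum_eq_pow hu0 hinit hrec hc n⟩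
end

section
/- For each k ≥ 0, the universal coefficients c(Y) in the expansion B^k(b) = ∑_Y c(Y) Y(b) over all Young diagrams Y of total degree k sum to 1: ∑_{partitions of k} (−1)^{k+ℓ} · k!/((k₁!)^{ℓ₁}···(k_n!)^{ℓ_n}) · ℓ!/(ℓ₁!···ℓ_n!) = 1, where the sum is over partitions of k into parts k₁ > … > k_n with multiplicities ℓ₁, …, ℓ_n and ℓ = ℓ₁ + … + ℓ_n. -/
/-!
The factor `ℓ!/∏ ℓⱼ!` counts the compositions (ordered partitions) of `k` with the given parts,
so the sum is `(-1)^k k! g k`, where `g n` is the sum of `∏ᵢ (-1/kᵢ!)` over all compositions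
`(k₁, …, k_ℓ)` of `n`.
Splitting off the first block gives `g (n + 1) = -∑ᵢ g (n - i) / (i + 1)!`, which says that the
generating function `G` of `g` satisfies `(1 + (eˣ - 1)) G = 1`; hence `G = e⁻ˣ` and
`g k = (-1)^k / k!`.
-/

open Finset Nat

namespace Multiset

variable {α : Type*} [DecidableEq α]

theorem lists_toFinset_eq_biUnion {m : Multiset α} (hm : m ≠ 0) :
    m.lists.toFinset = m.toFinset.biUnion fun a =>
      (m.erase a).lists.toFinset.map ⟨List.cons a, List.cons_injective⟩ := by
  ext l
  simp only [mem_toFinset, mem_lists_iff, Finset.mem_biUnion, Finset.mem_map,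
    Function.Embedding.coeFn_mk, quot_mk_to_coe]
  constructor
  · rintro rfl
    cases l with
    | nil => exact absurd rfl hm
    | cons a t => exact ⟨a, by simp, t, by simp, rfl⟩
  · rintro ⟨a, ha, t, ht, rfl⟩
    rw [← cons_erase ha, ht, cons_coe]

theorem prod_factorial_count_eq_count_mul {m : Multiset α} {a : α} (ha : a ∈ m) :
    ∏ b ∈ m.toFinset, (m.count b)! =
      m.count a * ∏ b ∈ (m.erase a).toFinset, ((m.erase a).count b)! := by
  have hext : ∏ b ∈ (m.erase a).toFinset, ((m.erase a).count b)! =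
      ∏ b ∈ m.toFinset, ((m.erase a).count b)! :=
    prod_subset (toFinset_subset.mpr (erase_subset a m)) fun b _ hb => by
      rw [mem_toFinset, ← count_eq_zero] at hb
      rw [hb, factorial_zero]
  have ha' : a ∈ m.toFinset := mem_toFinset.mpr ha
  rw [hext, ← mul_prod_erase _ _ ha', ← mul_prod_erase _ _ ha', count_erase_self, ← mul_assoc,
    mul_factorial_pred (count_ne_zero.mpr ha)]
  congr 1
  exact prod_congr rfl fun b hb => by rw [count_erase_of_ne (ne_of_mem_erase hb)]

theorem card_lists_toFinset_mul_prod_factorial_count (m : Multiset α) :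
    m.lists.toFinset.card * ∏ a ∈ m.toFinset, (m.count a)! = (card m)! := by
  induction h : card m generalizing m with
  | zero =>
    rw [card_eq_zero] at h
    subst h
    rw [← coe_nil, lists_coe]
    simp
  | succ n ih =>
    have hm : m ≠ 0 := by rintro rfl; simp at h
    rw [lists_toFinset_eq_biUnion hm, card_biUnion, sum_mul, factorial_succ, ← h,
      ← toFinset_sum_count_eq, sum_mul]
    · refine sum_congr rfl fun a ha => ?_
      have ha : a ∈ m := mem_toFinset.mp ha
      rw [Finset.card_map, prod_factorial_count_eq_count_mul ha, mul_left_comm,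
        ih _ (by rw [card_erase_of_mem ha, h]; rfl)]
    · intro a _ b _ hab
      simp only [Function.onFun, Finset.disjoint_left, Finset.mem_map, Function.Embedding.coeFn_mk]
      rintro _ ⟨t, _, rfl⟩ ⟨t', _, h⟩
      exact hab (List.cons_eq_cons.mp h).1.symm

theorem card_lists_toFinset_eq_div {K : Type*} [Semifield K] [CharZero K]
    (m : Multiset α) :
    (m.lists.toFinset.card : K) = (card m)! / ∏ a ∈ m.toFinset, ((m.count a)! : K) := by
  rw [eq_div_iff (prod_ne_zero_iff.mpr fun a _ => cast_ne_zero.mpr (factorial_ne_zero _))]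
  exact_mod_cast card_lists_toFinset_mul_prod_factorial_count m

theorem prod_map_neg_inv_factorial {K : Type*} [Field K] (m : Multiset ℕ) :
    (m.map fun j => -(j ! : K)⁻¹).prod = (-1) ^ card m / ((m.map factorial).prod : ℕ) := by
  induction m using Multiset.induction_on with
  | empty => simp
  | cons a m ih =>
    rw [map_cons, prod_cons, ih, map_cons, prod_cons, card_cons, pow_succ]
    push_cast
    ring

end Multiset

def compositionLists (n : ℕ) : Finset (List ℕ) :=
  (univ : Finset (Composition n)).image Composition.blocks

theorem mem_compositionLists {n : ℕ} {l : List ℕ} :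
    l ∈ compositionLists n ↔ l.sum = n ∧ ∀ i ∈ l, 0 < i := by
  simp only [compositionLists, mem_image, mem_univ, true_and]
  constructor
  · rintro ⟨c, rfl⟩
    exact ⟨c.blocks_sum, fun i hi => c.blocks_pos hi⟩
  · rintro ⟨hsum, hpos⟩
    exact ⟨⟨l, hpos _, hsum⟩, rfl⟩

theorem compositionLists_zero : compositionLists 0 = {[]} := by
  ext l
  rw [mem_compositionLists, mem_singleton]
  constructor
  · rintro ⟨hsum, hpos⟩
    rw [List.sum_eq_zero_iff] at hsum
    exact List.eq_nil_iff_forall_not_mem.mpr fun i hi => (hpos i hi).ne' (hsum i hi)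
  · rintro rfl
    simp

theorem compositionLists_succ (n : ℕ) :
    compositionLists (n + 1) = (range (n + 1)).biUnion fun i =>
      (compositionLists (n - i)).map ⟨List.cons (i + 1), List.cons_injective⟩ := by
  ext l
  simp only [mem_biUnion, mem_map, mem_range, Function.Embedding.coeFn_mk, mem_compositionLists]
  constructor
  · rintro ⟨hsum, hpos⟩
    cases l with
    | nil => simp at hsum
    | cons a t =>
      have ha := hpos a List.mem_cons_self
      rw [List.sum_cons] at hsum
      refine ⟨a - 1, by omega, t, ⟨by omega, fun i hi => hpos i (List.mem_cons_of_mem a hi)⟩, ?_⟩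
      rw [Nat.sub_add_cancel ha]
  · rintro ⟨i, hi, t, ⟨hsum, hpos⟩, rfl⟩
    refine ⟨by rw [List.sum_cons]; omega, ?_⟩
    simp only [List.mem_cons, forall_eq_or_imp]
    exact ⟨i.succ_pos, hpos⟩

theorem sum_compositionLists_succ {R : Type*} [CommSemiring R] (w : ℕ → R) (n : ℕ) :
    ∑ l ∈ compositionLists (n + 1), (l.map w).prod =
      ∑ i ∈ range (n + 1), w (i + 1) * ∑ l ∈ compositionLists (n - i), (l.map w).prod := by
  rw [compositionLists_succ, sum_biUnion]
  · simp only [sum_map, Function.Embedding.coeFn_mk, List.map_cons, List.prod_cons, mul_sum]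
  · intro i _ j _ hij
    simp only [Function.onFun, Finset.disjoint_left, mem_map, Function.Embedding.coeFn_mk]
    rintro _ ⟨t, _, rfl⟩ ⟨t', _, h⟩
    exact hij (by simpa using (List.cons_eq_cons.mp h).1.symm)

theorem compositionLists_eq_biUnion_partitions (n : ℕ) :
    compositionLists n = univ.biUnion fun p : n.Partition => p.parts.lists.toFinset := by
  ext l
  simp only [mem_compositionLists, mem_biUnion, mem_univ, true_and, Multiset.mem_toFinset,
    Multiset.mem_lists_iff, Multiset.quot_mk_to_coe]
  constructor
  · rintro ⟨hsum, hpos⟩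
    exact ⟨⟨l, fun hi => hpos _ hi, by rwa [Multiset.sum_coe]⟩, rfl⟩
  · rintro ⟨p, hp⟩
    refine ⟨by rw [← Multiset.sum_coe, ← hp, p.parts_sum], fun i hi => p.parts_pos ?_⟩
    rw [hp]
    exact hi

theorem sum_compositionLists_eq_sum_partitions {M : Type*} [AddCommMonoid M]
    (F : Multiset ℕ → M) (n : ℕ) :
    ∑ l ∈ compositionLists n, F l = ∑ p : n.Partition, p.parts.lists.toFinset.card • F p.parts := by
  rw [compositionLists_eq_biUnion_partitions, sum_biUnion]
  · refine sum_congr rfl fun p _ => ?_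
    rw [← sum_const]
    refine sum_congr rfl fun l hl => ?_
    rw [Multiset.mem_toFinset, Multiset.mem_lists_iff] at hl
    rw [hl]
    rfl
  · intro p _ q _ hpq
    simp only [Function.onFun, Finset.disjoint_left, Multiset.mem_toFinset, Multiset.mem_lists_iff]
    intro l hp hq
    exact hpq (Nat.Partition.ext (hp.trans hq.symm))

section Exponential

variable {K : Type*} [Field K] [CharZero K]

theorem sum_range_neg_one_pow_div_factorial_mul_factorial {n : ℕ} (hn : n ≠ 0) :
    ∑ i ∈ range (n + 1), (-1 : K) ^ (n - i) / (i ! * (n - i)!) = 0 := by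
  have hbinom := add_pow (1 : K) (-1) n
  rw [add_neg_cancel, zero_pow hn] at hbinom
  simp only [one_pow, one_mul] at hbinom
  rw [← mul_zero (n ! : K)⁻¹, hbinom, mul_sum]
  refine sum_congr rfl fun i hi => ?_
  have : (n ! : K) ≠ 0 := cast_ne_zero.mpr (factorial_ne_zero n)
  rw [cast_choose K (mem_range_succ_iff.mp hi)]
  field_simp

theorem sum_compositionLists_prod_neg_inv_factorial (n : ℕ) :
    ∑ l ∈ compositionLists n, (l.map fun j => -(j ! : K)⁻¹).prod = (-1) ^ n / n ! := by
  induction n using Nat.strong_induction_on with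
  | _ n ih =>
    cases n with
    | zero => simp [compositionLists_zero]
    | succ n =>
      have hzero := sum_range_neg_one_pow_div_factorial_mul_factorial (K := K) n.succ_ne_zero
      rw [sum_range_succ'] at hzero
      simp only [Nat.succ_eq_add_one, Nat.add_sub_add_right, Nat.sub_zero, factorial_zero,
        cast_one, one_mul] at hzero
      rw [sum_compositionLists_succ]
      calc ∑ i ∈ range (n + 1), -((i + 1)! : K)⁻¹ *
            ∑ l ∈ compositionLists (n - i), (l.map fun j => -(j ! : K)⁻¹).prod
          = -∑ i ∈ range (n + 1), (-1 : K) ^ (n - i) / ((i + 1)! * (n - i)!) := by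
            rw [← sum_neg_distrib]
            refine sum_congr rfl fun i _ => ?_
            rw [ih (n - i) (by omega)]
            ring
        _ = (-1) ^ (n + 1) / (n + 1)! := by linear_combination -hzero

end Exponential

/-- The universal coefficients `c(Y) = (−1)^{k+ℓ} · k!/∏(kⱼ!)^{ℓⱼ} · ℓ!/∏ℓⱼ!`
of the change-of-basis formula for discrete polynomials, summed over all Young
diagrams (partitions) of total degree `k`, add up to `1`. Here a partition `p`
of `k` has parts `p.parts` (a multiset), `ℓ = card p.parts`, the first
multinomial is `k!` over the product of the factorials of all parts, and the
second is `ℓ!` over the product of the factorials of the multiplicities. -/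
theorem young_coefficients_sum_to_one (k : ℕ) :
    ∑ p : Nat.Partition k,
      ((-1 : ℚ) ^ (k + Multiset.card p.parts)
        * (k.factorial : ℚ) / (((p.parts.map Nat.factorial).prod : ℕ) : ℚ)
        * ((Multiset.card p.parts).factorial : ℚ)
        / ∏ i ∈ p.parts.toFinset, ((p.parts.count i).factorial : ℚ)) = 1 := by
  calc _ = ∑ p : k.Partition, (-1) ^ k * k ! *
        (p.parts.lists.toFinset.card • (p.parts.map fun j => -(j ! : ℚ)⁻¹).prod) :=
        sum_congr rfl fun p _ => by
          rw [nsmul_eq_mul, Multiset.card_lists_toFinset_eq_div,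
            Multiset.prod_map_neg_inv_factorial, pow_add]
          ring
    _ = (-1) ^ k * k ! * ∑ l ∈ compositionLists k, (l.map fun j => -(j ! : ℚ)⁻¹).prod := by
        rw [← mul_sum, ← sum_compositionLists_eq_sum_partitions
          (fun m => (m.map fun j => -(j ! : ℚ)⁻¹).prod)]
        simp only [Multiset.map_coe, Multiset.prod_coe]
    _ = 1 := by
        rw [sum_compositionLists_prod_neg_inv_factorial]
        field_simp
        rw [← pow_mul, pow_mul', neg_one_sq, one_pow]
end

section
/- On the rectangular critical lattice generated by δe^{iθ} and δe^{−iθ}, the discrete power Z^{:k:} satisfies: at a next-nearest neighbor y of the origin across a rhombus with half-angle θ at the origin (so y = δe^{iθ} + δe^{−iθ} = 2δcos θ), Z^{:k:}(y) = (k!/2^{2k−2}) · (sin kθ)/(sin θ · cos^{k−1}θ) · y^k. -/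
open Complex

/-- On the rhombus `O, x = δe^{iθ}, y = x + x', x' = δe^{−iθ}` of the
rectangular critical lattice, the discrete powers (defined by trapezoidal edge
integration `dZ^{:k:} = k Z^{:k−1:} dZ` along the four edges, with
`Z^{:0:} = 1` and `Z^{:k:}(O) = 0` for `k ≥ 1`) satisfy at the next-nearest
neighbor `y = 2δcos θ`:
`Z^{:k:}(y) = (k!/2^{2k−2}) · sin kθ/(sin θ cos^{k−1}θ) · y^k`. -/
theorem discrete_power_at_next_neighbor (δ θ : ℝ) (hδ : 0 < δ)
    (hθ₀ : 0 < θ) (hθ₁ : θ < Real.pi / 2)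
    (x x' y : ℂ) (hx : x = δ * exp (I * θ)) (hx' : x' = δ * exp (-(I * θ)))
    (hy : y = x + x')
    (W : ℕ → ℂ → ℂ)
    (hW0 : ∀ p ∈ ({0, x, x', y} : Set ℂ), W 0 p = 1)
    (hWO : ∀ k, W (k + 1) 0 = 0)
    (hedge : ∀ a b : ℂ, ((a, b) ∈ ({(0, x), (0, x'), (x, y), (x', y)} :
        Set (ℂ × ℂ))) → ∀ k : ℕ,
      W (k + 1) b = W (k + 1) a + ((k : ℂ) + 1) * (W k a + W k b) / 2 * (b - a)) :
    ∀ k : ℕ, 1 ≤ k →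
      W k y = ((k.factorial : ℂ) / 2 ^ (2 * k - 2))
        * ((Real.sin (k * θ) : ℂ) / ((Real.sin θ : ℂ) * (Real.cos θ : ℂ) ^ (k - 1)))
        * y ^ k := by
  have hpi : θ < Real.pi := lt_trans hθ₁ (by linarith [Real.pi_pos])
  have hsr : Real.sin θ ≠ 0 := ne_of_gt (Real.sin_pos_of_pos_of_lt_pi hθ₀ hpi)
  have hcr : Real.cos θ ≠ 0 :=
    ne_of_gt (Real.cos_pos_of_mem_Ioo ⟨by linarith [Real.pi_pos], hθ₁⟩)
  set u : ℂ := exp (I * θ) with hu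
  have hune : u ≠ 0 := Complex.exp_ne_zero _
  have heu : u = Complex.cos θ + Complex.sin θ * I := by
    rw [hu, mul_comm, Complex.exp_mul_I]
  have hinv : u⁻¹ = Complex.cos θ - Complex.sin θ * I := by
    rw [hu, ← Complex.exp_neg, show -(I * (θ:ℂ)) = (-θ : ℂ) * I by push_cast; ring,
      Complex.exp_mul_I, Complex.cos_neg, Complex.sin_neg]
    ring
  have hpow : ∀ k : ℕ, u ^ k = Complex.cos (k * θ) + Complex.sin (k * θ) * I := by
    intro k
    rw [← Complex.exp_mul_I, show ((k:ℂ) * θ) * I = (k:ℂ) * (I * θ) by ring,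
      Complex.exp_nat_mul]
  have hxu : x = (δ : ℂ) * u := hx
  have hx'u : x' = (δ : ℂ) * u⁻¹ := by rw [hx', ← Complex.exp_neg]
  have hyx : y - x = (δ : ℂ) * u⁻¹ := by rw [hy, hx'u]; ring
  have hsin : (Complex.sin θ) ≠ 0 := by
    rw [← Complex.ofReal_sin]; exact_mod_cast hsr
  have hcos : (Complex.cos θ) ≠ 0 := by
    rw [← Complex.ofReal_cos]; exact_mod_cast hcr
  have huu : u + u⁻¹ = 2 * Complex.cos θ := by rw [hinv, heu]; ring
  -- values along the edge 0 → x
  have hA : ∀ n : ℕ, (2:ℂ) ^ n * W (n + 1) x = ((n+1).factorial : ℂ) * (δ:ℂ)^(n+1) * u^(n+1) := by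
    intro n
    induction n with
    | zero =>
      have h := hedge 0 x (by simp) 0
      rw [hWO 0, hW0 0 (by simp), hW0 x (by simp)] at h
      rw [h, hxu]
      norm_num
    | succ n ih =>
      have h := hedge 0 x (by simp) (n+1)
      rw [hWO (n+1), hWO n] at h
      rw [h, show x - 0 = (δ:ℂ) * u from by rw [hxu]; ring,
        Nat.factorial_succ (n+1)]
      push_cast
      linear_combination (((n:ℂ)+2) * ((δ:ℂ) * u)) * ih
  -- values at y
  have hC : ∀ n : ℕ, (2:ℂ) ^ n * W (n + 1) y * Complex.sin θ =
      ((n+1).factorial : ℂ) * (δ:ℂ)^(n+1) *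
        (2 * Complex.cos θ * Complex.sin (((n:ℂ)+1) * θ)) := by
    intro n
    induction n with
    | zero =>
      have h := hedge x y (by simp) 0
      rw [hW0 x (by simp), hW0 y (by simp)] at h
      have hA0 := hA 0
      rw [h, hyx]
      norm_num [Nat.factorial] at hA0 ⊢
      linear_combination Complex.sin θ * hA0 + ((δ:ℂ) * Complex.sin θ) * huu
    | succ n ih =>
      have h := hedge x y (by simp) (n+1)
      have hA1 := hA (n+1)
      rw [Nat.factorial_succ (n+1)] at hA1
      push_cast at hA1
      rw [h, hyx, Nat.factorial_succ (n+1)]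
      have key : Complex.sin θ * u^(n+2) + Complex.sin θ * (u^(n+1) * u⁻¹) +
          2 * Complex.cos θ * Complex.sin (((n:ℂ)+1) * θ) * u⁻¹ =
          2 * Complex.cos θ * Complex.sin (((n:ℂ)+1+1) * θ) := by
        rw [hpow (n+2), hpow (n+1), hinv,
          show ((n+2 : ℕ):ℂ) * (θ:ℂ) = ((n:ℂ)+1) * θ + θ by push_cast; ring,
          show ((n+1 : ℕ):ℂ) * (θ:ℂ) = ((n:ℂ)+1) * θ by push_cast; ring,
          show ((n:ℂ)+1+1) * (θ:ℂ) = ((n:ℂ)+1) * θ + θ by ring,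
          Complex.sin_add, Complex.cos_add]
        linear_combination (-(Complex.sin (θ:ℂ)^2 *
          Complex.sin (((n:ℂ)+1) * θ))) * Complex.I_sq
      push_cast
      linear_combination Complex.sin θ * hA1 +
        (((n:ℂ)+2) * (δ:ℂ) * u⁻¹ * Complex.sin θ) * (hA n) +
        (((n:ℂ)+2) * (δ:ℂ) * u⁻¹) * ih +
        (((n:ℂ)+2) * ((n+1).factorial : ℂ) * (δ:ℂ)^(n+2)) * key
  -- conclusion
  intro k hk
  obtain ⟨n, rfl⟩ : ∃ n, k = n + 1 := ⟨k - 1, by omega⟩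
  have hy2 : y = 2 * (δ:ℂ) * Complex.cos θ := by
    rw [hy, hxu, hx'u, hinv, heu]; ring
  have h2n : ((2:ℂ))^n ≠ 0 := pow_ne_zero _ two_ne_zero
  have hW : W (n+1) y = ((n+1).factorial : ℂ) * (δ:ℂ)^(n+1) *
      (2 * Complex.cos θ * Complex.sin (((n:ℂ)+1) * θ)) / (2^n * Complex.sin θ) := by
    rw [eq_div_iff (mul_ne_zero h2n hsin)]
    linear_combination hC n
  rw [hW, show 2*(n+1)-2 = 2*n from by omega, show (n+1)-1 = n from rfl,
    show y ^ (n+1) = (2 * (δ:ℂ) * Complex.cos θ)^(n+1) from by rw [hy2]]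
  push_cast
  rw [show ((2:ℂ))^(2*n) = 4^n from by rw [pow_mul]; norm_num]
  field_simp
  ring_nf
  rw [show ((2:ℂ))^(n*2) = 4^n from by rw [mul_comm, pow_mul]; norm_num]
end
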